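/- arXiv:2505.09514 — 4 statements merged into one kernel-verified Lean document; each statement's English description precedes it below -/
import Mathlib

section
/- Monotonicity of the CPT-function on all-positive outcomes: Assume all outcomes are strictly positive, i.e. 0 < o_1 ≤ … ≤ o_k, and assume u, w⁺ are monotone increasing with u(0) = 0. Then the CPT-function is componentwise monotone increasing in the probability vector: for all p, p' ∈ [0,1]^k with p_i ≥ p'_i for every index i, cpt(o,p) ≥ cpt(o,p'). -/
/-- The CPT decision weight of the `i`-th outcome (1-based indices `1,...,k`). -/
noncomputable def decisionWeight (k : ℕ) (o : ℕ → ℝ) (wp wm : ℝ → ℝ)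
    (p : ℕ → ℝ) (i : ℕ) : ℝ :=
  if 0 < o i then
    wp (∑ m ∈ Finset.Icc i k, p m) - wp (∑ m ∈ Finset.Icc (i + 1) k, p m)
  else if o i < 0 then
    wm (∑ m ∈ Finset.Icc 1 i, p m) - wm (∑ m ∈ Finset.Icc 1 (i - 1), p m)
  else 0

/-- The CPT-function `cpt(o,p) = Σ_{i=1}^k u(o_i) · π_i(p)`. -/
noncomputable def cpt (k : ℕ) (o : ℕ → ℝ) (u wp wm : ℝ → ℝ) (p : ℕ → ℝ) : ℝ :=
  ∑ i ∈ Finset.Icc 1 k, u (o i) * decisionWeight k o wp wm p i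

/-- Abel summation for Icc 1 n with `a 0 = 0`. -/
lemma abel_aux (a f : ℕ → ℝ) (ha0 : a 0 = 0) (n : ℕ) :
    ∑ i ∈ Finset.Icc 1 n, a i * (f i - f (i + 1)) =
      (∑ i ∈ Finset.Icc 1 n, (a i - a (i - 1)) * f i) - a n * f (n + 1) := by
  induction n with
  | zero => simp [ha0]
  | succ n ih =>
      rw [Finset.sum_Icc_succ_top (by omega : 1 ≤ n + 1),
        Finset.sum_Icc_succ_top (by omega : 1 ≤ n + 1), ih]
      simp only [Nat.add_sub_cancel]
      ring

/-- Monotonicity of the CPT-function on all-positive outcomes. -/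
theorem cpt_monotone_of_pos (k : ℕ) (hk : 1 ≤ k) (o : ℕ → ℝ) (u wp wm : ℝ → ℝ)
    (hord : ∀ i j : ℕ, 1 ≤ i → i ≤ j → j ≤ k → o i ≤ o j)
    (hpos : ∀ i ∈ Finset.Icc 1 k, 0 < o i)
    (hu : ∀ x y : ℝ, x ≥ y → u x ≥ u y)
    (hwp : ∀ x y : ℝ, x ≥ y → wp x ≥ wp y)
    (hu0 : u 0 = 0)
    (p p' : ℕ → ℝ)
    (hp : ∀ i ∈ Finset.Icc 1 k, p i ∈ Set.Icc (0:ℝ) 1)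
    (hp' : ∀ i ∈ Finset.Icc 1 k, p' i ∈ Set.Icc (0:ℝ) 1)
    (hge : ∀ i ∈ Finset.Icc 1 k, p i ≥ p' i) :
    cpt k o u wp wm p ≥ cpt k o u wp wm p' := by
  set a : ℕ → ℝ := fun i => if i = 0 then 0 else u (o i) with ha
  set f : (ℕ → ℝ) → ℕ → ℝ := fun q i => wp (∑ m ∈ Finset.Icc i k, q m) with hf
  have key : ∀ q : ℕ → ℝ, cpt k o u wp wm q =
      (∑ i ∈ Finset.Icc 1 k, (a i - a (i - 1)) * f q i) - a k * f q (k + 1) := by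
    intro q
    rw [← abel_aux a (f q) (by simp [ha]) k]
    unfold cpt decisionWeight
    refine Finset.sum_congr rfl fun i hi => ?_
    have h1 : 1 ≤ i := (Finset.mem_Icc.mp hi).1
    rw [if_pos (hpos i hi)]
    have hne : i ≠ 0 := by omega
    simp [ha, hf, hne]
  rw [key p, key p']
  have hfk : f p (k + 1) = f p' (k + 1) := by
    simp [hf, Finset.Icc_eq_empty (by omega : ¬ k + 1 ≤ k)]
  rw [hfk]
  have hmono : ∀ i ∈ Finset.Icc 1 k, f p' i ≤ f p i := by
    intro i hi
    have h1 : 1 ≤ i := (Finset.mem_Icc.mp hi).1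
    apply hwp
    apply Finset.sum_le_sum
    intro m hm
    have hm' := Finset.mem_Icc.mp hm
    exact hge m (Finset.mem_Icc.mpr ⟨by omega, hm'.2⟩)
  have hcoef : ∀ i ∈ Finset.Icc 1 k, 0 ≤ a i - a (i - 1) := by
    intro i hi
    have h1 := Finset.mem_Icc.mp hi
    rcases Nat.eq_or_lt_of_le h1.1 with h | h
    · have : a i - a (i - 1) = u (o i) - 0 := by
        simp [ha, ← h]
      rw [this, sub_nonneg, ← hu0]
      exact hu _ _ (le_of_lt (hpos i hi))
    · have hi0 : i ≠ 0 := by omega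
      have hi1 : i - 1 ≠ 0 := by omega
      simp only [ha, if_neg hi0, if_neg hi1, sub_nonneg]
      exact hu _ _ (hord (i - 1) i (by omega) (by omega) h1.2)
  have : ∑ i ∈ Finset.Icc 1 k, (a i - a (i - 1)) * f p' i ≤
      ∑ i ∈ Finset.Icc 1 k, (a i - a (i - 1)) * f p i := by
    apply Finset.sum_le_sum
    intro i hi
    exact mul_le_mul_of_nonneg_left (hmono i hi) (hcoef i hi)
  linarith
end

section
/- Antitonicity of the CPT-function on all-negative outcomes: Assume all outcomes are strictly negative, i.e. o_1 ≤ … ≤ o_k < 0, and assume u, w⁻ are monotone increasing with u(0) = 0. Then the CPT-function is componentwise monotone decreasing in the probability vector: for all p, p' ∈ [0,1]^k with p_i ≥ p'_i for every index i, cpt(o,p) ≤ cpt(o,p'). -/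
/-- Abel-summation key estimate: if `f` is increasing on `1..n`, `D 0 = 0`, and
`D i ≥ 0` on `0..n`, then `Σ_{i=1}^n f i (D i − D (i−1)) ≤ f n * D n`. -/
lemma abel_key (f D : ℕ → ℝ) (hD0 : D 0 = 0) :
    ∀ n : ℕ, (∀ i, 1 ≤ i → i < n → f i ≤ f (i + 1)) → (∀ i, i ≤ n → 0 ≤ D i) →
    ∑ i ∈ Finset.Icc 1 n, f i * (D i - D (i - 1)) ≤ f n * D n := by
  intro n
  induction n with
  | zero => intro _ _; simp [hD0]
  | succ n ih =>
    intro hf hD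
    rw [Finset.sum_Icc_succ_top (Nat.succ_le_succ (Nat.zero_le n))]
    have h1 := ih (fun i h1 h2 => hf i h1 (h2.trans (Nat.lt_succ_self n)))
      (fun i h => hD i (h.trans (Nat.le_succ n)))
    have hfn : f n * D n ≤ f (n + 1) * D n := by
      rcases Nat.eq_zero_or_pos n with rfl | hn
      · simp [hD0]
      · exact mul_le_mul_of_nonneg_right (hf n hn (Nat.lt_succ_self n)) (hD n (Nat.le_succ n))
    simp only [Nat.add_sub_cancel]
    have hexp : f (n + 1) * (D (n + 1) - D n) = f (n + 1) * D (n + 1) - f (n + 1) * D n :=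
      mul_sub _ _ _
    linarith

/-- Antitonicity of the CPT-function on all-negative outcomes. -/
theorem cpt_antitone_of_neg (k : ℕ) (hk : 1 ≤ k) (o : ℕ → ℝ) (u wp wm : ℝ → ℝ)
    (hord : ∀ i j : ℕ, 1 ≤ i → i ≤ j → j ≤ k → o i ≤ o j)
    (hneg : ∀ i ∈ Finset.Icc 1 k, o i < 0)
    (hu : ∀ x y : ℝ, x ≥ y → u x ≥ u y)
    (hwm : ∀ x y : ℝ, x ≥ y → wm x ≥ wm y)
    (hu0 : u 0 = 0)
    (p p' : ℕ → ℝ)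
    (hp : ∀ i ∈ Finset.Icc 1 k, p i ∈ Set.Icc (0:ℝ) 1)
    (hp' : ∀ i ∈ Finset.Icc 1 k, p' i ∈ Set.Icc (0:ℝ) 1)
    (hge : ∀ i ∈ Finset.Icc 1 k, p i ≥ p' i) :
    cpt k o u wp wm p ≤ cpt k o u wp wm p' := by
  set A : ℕ → ℝ := fun i => wm (∑ m ∈ Finset.Icc 1 i, p m) with hA
  set B : ℕ → ℝ := fun i => wm (∑ m ∈ Finset.Icc 1 i, p' m) with hB
  set D : ℕ → ℝ := fun i => A i - B i with hDdef
  set f : ℕ → ℝ := fun i => u (o i) with hfdef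
  -- decision weights in the all-negative case
  have hdwp : ∀ i ∈ Finset.Icc 1 k, decisionWeight k o wp wm p i = A i - A (i - 1) := by
    intro i hi
    have h := hneg i hi
    simp [decisionWeight, h, not_lt.2 h.le, hA]
  have hdwp' : ∀ i ∈ Finset.Icc 1 k, decisionWeight k o wp wm p' i = B i - B (i - 1) := by
    intro i hi
    have h := hneg i hi
    simp [decisionWeight, h, not_lt.2 h.le, hB]
  have hD0 : D 0 = 0 := by simp [hDdef, hA, hB]
  have hDnn : ∀ i, i ≤ k → 0 ≤ D i := by
    intro i hik
    have hsum : ∑ m ∈ Finset.Icc 1 i, p' m ≤ ∑ m ∈ Finset.Icc 1 i, p m := by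
      apply Finset.sum_le_sum
      intro m hm
      rw [Finset.mem_Icc] at hm
      exact hge m (Finset.mem_Icc.2 ⟨hm.1, hm.2.trans hik⟩)
    exact sub_nonneg.2 (hwm _ _ hsum)
  have hfmono : ∀ i, 1 ≤ i → i < k → f i ≤ f (i + 1) := by
    intro i h1 h2
    exact hu _ _ (hord i (i + 1) h1 (Nat.le_succ i) h2)
  have hfk : f k ≤ 0 := by
    have := hu 0 (o k) (le_of_lt (hneg k (Finset.mem_Icc.2 ⟨hk, le_refl k⟩)))
    linarith [hu0 ▸ this]
  have key := abel_key f D hD0 k hfmono hDnn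
  have hDk : 0 ≤ D k := hDnn k (le_refl k)
  have hfinal : f k * D k ≤ 0 := mul_nonpos_of_nonpos_of_nonneg hfk hDk
  have hrw : cpt k o u wp wm p - cpt k o u wp wm p'
      = ∑ i ∈ Finset.Icc 1 k, f i * (D i - D (i - 1)) := by
    unfold cpt
    rw [← Finset.sum_sub_distrib]
    apply Finset.sum_congr rfl
    intro i hi
    rw [hdwp i hi, hdwp' i hi]
    simp only [hDdef]
    ring
  linarith [hrw ▸ (key.trans hfinal)]
end

section
/- The CPT-function is a difference of monotonic functions: Assume u, w⁺, w⁻ are monotone increasing with u(0) = 0. Then there exist functions F, G : [0,1]^k → ℝ, each componentwise monotone increasing (p ≥ p' componentwise implies F(p) ≥ F(p') and G(p) ≥ G(p')), such that cpt(o,p) = F(p) − G(p) for all p ∈ [0,1]^k. Concretely, one may take F(p) = Σ_{i : o_i > 0} u(o_i)·π_i(p) and G(p) = −Σ_{i : o_i < 0} u(o_i)·π_i(p). -/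
open Finset

section SummationByParts

variable {j k : ℕ}

theorem sum_Icc_mul_sub_succ_add_nonneg {a h : ℕ → ℝ} (hjk : j ≤ k) (ha₀ : 0 ≤ a j)
    (ha : MonotoneOn a (Set.Icc j k)) (hh : ∀ i ∈ Icc j k, 0 ≤ h i) :
    0 ≤ ∑ i ∈ Icc j k, a i * (h i - h (i + 1)) + a k * h (k + 1) := by
  induction k, hjk using Nat.le_induction with
  | base => simpa [mul_sub] using mul_nonneg ha₀ (hh j (by simp))
  | succ k hjk ih =>
    have hk : j ≤ k + 1 := k.le_succ.trans' hjk
    have step : 0 ≤ (a (k + 1) - a k) * h (k + 1) :=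
      mul_nonneg (sub_nonneg.2 (ha ⟨hjk, k.le_succ⟩ ⟨hk, le_rfl⟩ k.le_succ)) (hh _ (by simp [hk]))
    have key : ∑ i ∈ Icc j (k + 1), a i * (h i - h (i + 1)) + a (k + 1) * h (k + 1 + 1)
        = (∑ i ∈ Icc j k, a i * (h i - h (i + 1)) + a k * h (k + 1))
          + (a (k + 1) - a k) * h (k + 1) := by
      rw [sum_Icc_succ_top hk]; ring
    rw [key]
    exact add_nonneg (ih (ha.mono (Set.Icc_subset_Icc_right k.le_succ))
      fun i hi => hh i (Icc_subset_Icc_right k.le_succ hi)) step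

theorem sum_Icc_mul_sub_pred_add_ge {b h : ℕ → ℝ} (hjk : j ≤ k)
    (hb : AntitoneOn b (Set.Icc j k)) (hh : ∀ i ∈ Ico j k, 0 ≤ h i) :
    b k * h k ≤ ∑ i ∈ Icc j k, b i * (h i - h (i - 1)) + b j * h (j - 1) := by
  induction k, hjk using Nat.le_induction with
  | base => simp [mul_sub]
  | succ k hjk ih =>
    have hk : j ≤ k + 1 := k.le_succ.trans' hjk
    have step : 0 ≤ (b k - b (k + 1)) * h k :=
      mul_nonneg (sub_nonneg.2 (hb ⟨hjk, k.le_succ⟩ ⟨hk, le_rfl⟩ k.le_succ)) (hh _ (by simp [hjk]))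
    have key : ∑ i ∈ Icc j (k + 1), b i * (h i - h (i - 1)) + b j * h (j - 1)
          - b (k + 1) * h (k + 1)
        = (∑ i ∈ Icc j k, b i * (h i - h (i - 1)) + b j * h (j - 1) - b k * h k)
          + (b k - b (k + 1)) * h k := by
      rw [sum_Icc_succ_top hk, Nat.add_sub_cancel]; ring
    rw [← sub_nonneg, key]
    exact add_nonneg (sub_nonneg.2 (ih (hb.mono (Set.Icc_subset_Icc_right k.le_succ))
      fun i hi => hh i (Ico_subset_Ico_right k.le_succ hi))) step

theorem sum_Icc_mul_sub_succ_mono {a f g : ℕ → ℝ} (ha₀ : 0 ≤ a j)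
    (ha : MonotoneOn a (Set.Icc j k)) (hgf : ∀ i ∈ Icc j k, g i ≤ f i)
    (htop : f (k + 1) = g (k + 1)) :
    ∑ i ∈ Icc j k, a i * (g i - g (i + 1)) ≤ ∑ i ∈ Icc j k, a i * (f i - f (i + 1)) := by
  rcases lt_or_ge k j with hkj | hjk
  · simp [Icc_eq_empty_of_lt hkj]
  have := sum_Icc_mul_sub_succ_add_nonneg (h := f - g) hjk ha₀ ha
    fun i hi => sub_nonneg.2 (hgf i hi)
  simp only [Pi.sub_apply, htop, sub_self, mul_zero, add_zero] at this
  rw [← sub_nonneg, ← sum_sub_distrib]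
  exact this.trans_eq (sum_congr rfl fun i _ => by ring)

theorem sum_Icc_mul_sub_pred_mono {b f g : ℕ → ℝ} (hb₀ : 0 ≤ b k)
    (hb : AntitoneOn b (Set.Icc j k)) (hgf : ∀ i ∈ Icc j k, g i ≤ f i)
    (hbot : f (j - 1) = g (j - 1)) :
    ∑ i ∈ Icc j k, b i * (g i - g (i - 1)) ≤ ∑ i ∈ Icc j k, b i * (f i - f (i - 1)) := by
  rcases lt_or_ge k j with hkj | hjk
  · simp [Icc_eq_empty_of_lt hkj]
  have hfg : ∀ i ∈ Icc j k, 0 ≤ (f - g) i := fun i hi => sub_nonneg.2 (hgf i hi)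
  have := sum_Icc_mul_sub_pred_add_ge hjk hb fun i hi => hfg i (Ico_subset_Icc_self hi)
  simp only [Pi.sub_apply, hbot, sub_self, mul_zero, add_zero] at this
  rw [← sub_nonneg, ← sum_sub_distrib]
  exact (mul_nonneg hb₀ (hfg k (by simp [hjk]))).trans
    (this.trans_eq (sum_congr rfl fun i _ => by ring))

end SummationByParts

section Decomposition

variable (k : ℕ) (o : ℕ → ℝ) (u wp wm : ℝ → ℝ)

noncomputable def cptGain (p : ℕ → ℝ) : ℝ :=
  ∑ i ∈ (Icc 1 k).filter (fun i => 0 < o i), u (o i) * decisionWeight k o wp wm p i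

noncomputable def cptLoss (p : ℕ → ℝ) : ℝ :=
  -∑ i ∈ (Icc 1 k).filter (fun i => o i < 0), u (o i) * decisionWeight k o wp wm p i

theorem cpt_eq_cptGain_sub_cptLoss (p : ℕ → ℝ) :
    cpt k o u wp wm p = cptGain k o u wp wm p - cptLoss k o u wp wm p := by
  rw [cptGain, cptLoss, sub_neg_eq_add, sum_filter, sum_filter, ← sum_add_distrib, cpt]
  refine sum_congr rfl fun i _ => ?_
  rcases lt_trichotomy (o i) 0 with hneg | hzero | hpos
  · simp [hneg, hneg.not_gt]
  · simp [hzero, decisionWeight]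
  · simp [hpos, hpos.not_gt]

variable {k o u wp wm}

theorem cptGain_eq_sum_Icc (hu0 : u 0 = 0) (p : ℕ → ℝ) :
    cptGain k o u wp wm p = ∑ i ∈ Icc 1 k, u (max (o i) 0) *
      (wp (∑ m ∈ Icc i k, p m) - wp (∑ m ∈ Icc (i + 1) k, p m)) := by
  rw [cptGain, sum_filter]
  refine sum_congr rfl fun i _ => ?_
  by_cases hpos : 0 < o i
  · simp [hpos, hpos.le, decisionWeight]
  · simp [hpos, max_eq_right (not_lt.1 hpos), hu0]

theorem cptLoss_eq_sum_Icc (hu0 : u 0 = 0) (p : ℕ → ℝ) :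
    cptLoss k o u wp wm p = ∑ i ∈ Icc 1 k, -u (min (o i) 0) *
      (wm (∑ m ∈ Icc 1 i, p m) - wm (∑ m ∈ Icc 1 (i - 1), p m)) := by
  rw [cptLoss, sum_filter, ← sum_neg_distrib]
  refine sum_congr rfl fun i _ => ?_
  by_cases hneg : o i < 0
  · simp [hneg, hneg.le, hneg.not_gt, decisionWeight]
  · simp [hneg, min_eq_right (not_lt.1 hneg), hu0]

theorem cptGain_mono (ho : MonotoneOn o (Set.Icc 1 k)) (hu : Monotone u) (hu0 : u 0 = 0)
    (hwp : Monotone wp) {p p' : ℕ → ℝ} (hp : ∀ i ∈ Icc 1 k, p' i ≤ p i) :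
    cptGain k o u wp wm p' ≤ cptGain k o u wp wm p := by
  rw [cptGain_eq_sum_Icc hu0, cptGain_eq_sum_Icc hu0]
  refine sum_Icc_mul_sub_succ_mono (by simpa [hu0] using hu (le_max_right (o 1) 0))
    ((hu.comp (monotone_id.max monotone_const)).comp_monotoneOn ho) (fun i hi => hwp ?_) (by simp)
  exact sum_le_sum fun m hm => hp m (Icc_subset_Icc_left (mem_Icc.1 hi).1 hm)

theorem cptLoss_mono (ho : MonotoneOn o (Set.Icc 1 k)) (hu : Monotone u) (hu0 : u 0 = 0)
    (hwm : Monotone wm) {p p' : ℕ → ℝ} (hp : ∀ i ∈ Icc 1 k, p' i ≤ p i) :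
    cptLoss k o u wp wm p' ≤ cptLoss k o u wp wm p := by
  rw [cptLoss_eq_sum_Icc hu0, cptLoss_eq_sum_Icc hu0]
  refine sum_Icc_mul_sub_pred_mono (by simpa [hu0] using hu (min_le_right (o k) 0))
    ((hu.comp (monotone_id.min monotone_const)).comp_monotoneOn ho).neg (fun i hi => hwm ?_)
    (by simp)
  exact sum_le_sum fun m hm => hp m (Icc_subset_Icc_right (mem_Icc.1 hi).2 hm)

end Decomposition

theorem cpt_diff_of_monotone_general (k : ℕ) (o : ℕ → ℝ) (u wp wm : ℝ → ℝ)
    (hord : ∀ i j : ℕ, 1 ≤ i → i ≤ j → j ≤ k → o i ≤ o j)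
    (hu : ∀ x y : ℝ, x ≥ y → u x ≥ u y)
    (hwp : ∀ x y : ℝ, x ≥ y → wp x ≥ wp y)
    (hwm : ∀ x y : ℝ, x ≥ y → wm x ≥ wm y)
    (hu0 : u 0 = 0) :
    ∃ F G : (ℕ → ℝ) → ℝ,
      (∀ p p' : ℕ → ℝ,
          (∀ i ∈ Finset.Icc 1 k, p i ∈ Set.Icc (0:ℝ) 1) →
          (∀ i ∈ Finset.Icc 1 k, p' i ∈ Set.Icc (0:ℝ) 1) →
          (∀ i ∈ Finset.Icc 1 k, p i ≥ p' i) → F p ≥ F p') ∧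
      (∀ p p' : ℕ → ℝ,
          (∀ i ∈ Finset.Icc 1 k, p i ∈ Set.Icc (0:ℝ) 1) →
          (∀ i ∈ Finset.Icc 1 k, p' i ∈ Set.Icc (0:ℝ) 1) →
          (∀ i ∈ Finset.Icc 1 k, p i ≥ p' i) → G p ≥ G p') ∧
      (∀ p : ℕ → ℝ, (∀ i ∈ Finset.Icc 1 k, p i ∈ Set.Icc (0:ℝ) 1) →
          cpt k o u wp wm p = F p - G p) ∧
      (∀ p : ℕ → ℝ, F p =
          ∑ i ∈ (Finset.Icc 1 k).filter (fun i => 0 < o i),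
            u (o i) * decisionWeight k o wp wm p i) ∧
      (∀ p : ℕ → ℝ, G p =
          -∑ i ∈ (Finset.Icc 1 k).filter (fun i => o i < 0),
            u (o i) * decisionWeight k o wp wm p i) := by
  have ho : MonotoneOn o (Set.Icc 1 k) := fun i hi j hj hij => hord i j hi.1 hij hj.2
  have hu' : Monotone u := fun x y h => hu y x h
  exact ⟨cptGain k o u wp wm, cptLoss k o u wp wm,
    fun _ _ _ _ hp => cptGain_mono ho hu' hu0 (fun x y h => hwp y x h) hp,
    fun _ _ _ _ hp => cptLoss_mono ho hu' hu0 (fun x y h => hwm y x h) hp,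
    fun p _ => cpt_eq_cptGain_sub_cptLoss k o u wp wm p, fun _ => rfl, fun _ => rfl⟩

/-- The CPT-function is a difference of componentwise monotone increasing functions,
concretely `F(p) = Σ_{i : o_i > 0} u(o_i)·π_i(p)` and `G(p) = −Σ_{i : o_i < 0} u(o_i)·π_i(p)`. -/
theorem cpt_diff_of_monotone (k : ℕ) (hk : 1 ≤ k) (o : ℕ → ℝ) (u wp wm : ℝ → ℝ)
    (hord : ∀ i j : ℕ, 1 ≤ i → i ≤ j → j ≤ k → o i ≤ o j)
    (hu : ∀ x y : ℝ, x ≥ y → u x ≥ u y)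
    (hwp : ∀ x y : ℝ, x ≥ y → wp x ≥ wp y)
    (hwm : ∀ x y : ℝ, x ≥ y → wm x ≥ wm y)
    (hu0 : u 0 = 0) :
    ∃ F G : (ℕ → ℝ) → ℝ,
      (∀ p p' : ℕ → ℝ,
          (∀ i ∈ Finset.Icc 1 k, p i ∈ Set.Icc (0:ℝ) 1) →
          (∀ i ∈ Finset.Icc 1 k, p' i ∈ Set.Icc (0:ℝ) 1) →
          (∀ i ∈ Finset.Icc 1 k, p i ≥ p' i) → F p ≥ F p') ∧
      (∀ p p' : ℕ → ℝ,
          (∀ i ∈ Finset.Icc 1 k, p i ∈ Set.Icc (0:ℝ) 1) →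
          (∀ i ∈ Finset.Icc 1 k, p' i ∈ Set.Icc (0:ℝ) 1) →
          (∀ i ∈ Finset.Icc 1 k, p i ≥ p' i) → G p ≥ G p') ∧
      (∀ p : ℕ → ℝ, (∀ i ∈ Finset.Icc 1 k, p i ∈ Set.Icc (0:ℝ) 1) →
          cpt k o u wp wm p = F p - G p) ∧
      (∀ p : ℕ → ℝ, F p =
          ∑ i ∈ (Finset.Icc 1 k).filter (fun i => 0 < o i),
            u (o i) * decisionWeight k o wp wm p i) ∧
      (∀ p : ℕ → ℝ, G p =
          -∑ i ∈ (Finset.Icc 1 k).filter (fun i => o i < 0),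
            u (o i) * decisionWeight k o wp wm p i) :=
  cpt_diff_of_monotone_general k o u wp wm hord hu hwp hwm hu0
end

section
/- The CPT-function is not convex: Let γ = 9/4, let w : [0,1] → ℝ be w(x) = x^γ / (x^γ + (1−x)^γ)^{1/γ}, and let g : ℝ² → ℝ be g(p₁, p₂) = 2·w(p₁) + (w(p₁ + p₂) − w(p₁)). Then g is not a convex function on the simplex Δ = {(p₁, p₂) ∈ ℝ² : p₁ ≥ 0, p₂ ≥ 0, p₁ + p₂ ≤ 1}. (This follows because g is differentiable at x = (0.01, 0.31) with ⟨∇g(x), y − x⟩ > 0 and g(y) < g(x) for y = (0.01, 0.01), contradicting the first-order characterization g(y) ≥ g(x) + ⟨∇g(x), y − x⟩ of differentiable convex functions.) -/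
/-- The probability weighting function `w(x) = x^{9/4} / (x^{9/4} + (1−x)^{9/4})^{4/9}`. -/
noncomputable def cptWeight (x : ℝ) : ℝ :=
  x ^ ((9:ℝ)/4) / (x ^ ((9:ℝ)/4) + (1 - x) ^ ((9:ℝ)/4)) ^ ((4:ℝ)/9)

/-- The CPT-function of the prospect `[2 : p₁, 1 : p₂, 0 : 1 − p₁ − p₂]`
with identity utility and weighting function `cptWeight`. -/
noncomputable def cptEx (p : ℝ × ℝ) : ℝ :=
  2 * cptWeight p.1 + (cptWeight (p.1 + p.2) - cptWeight p.1)

lemma rpow94_pow4 {x : ℝ} (hx : 0 ≤ x) : (x ^ ((9:ℝ)/4)) ^ (4:ℕ) = x ^ (9:ℕ) := by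
  rw [← Real.rpow_natCast (x ^ ((9:ℝ)/4)) 4, ← Real.rpow_mul hx, ← Real.rpow_natCast x 9]
  norm_num

lemma rpow49_pow9 {x : ℝ} (hx : 0 ≤ x) : (x ^ ((4:ℝ)/9)) ^ (9:ℕ) = x ^ (4:ℕ) := by
  rw [← Real.rpow_natCast (x ^ ((4:ℝ)/9)) 9, ← Real.rpow_mul hx, ← Real.rpow_natCast x 4]
  norm_num

lemma cptWeight_zero : cptWeight 0 = 0 := by
  simp [cptWeight, Real.zero_rpow, Real.one_rpow]

lemma cptWeight_one : cptWeight 1 = 1 := by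
  simp [cptWeight, Real.zero_rpow, Real.one_rpow]

lemma cptWeight_half_le : cptWeight (1/2) ≤ 31/100 := by
  unfold cptWeight
  have h12 : (1 - (1:ℝ)/2) = 1/2 := by norm_num
  rw [h12]
  set N := ((1:ℝ)/2) ^ ((9:ℝ)/4) with hN
  have hNnn : 0 ≤ N := Real.rpow_nonneg (by norm_num) _
  have hN4 : N ^ (4:ℕ) = (1/2:ℝ) ^ (9:ℕ) := rpow94_pow4 (by norm_num)
  set D := (N + N) ^ ((4:ℝ)/9) with hD
  have hDnn : 0 ≤ D := Real.rpow_nonneg (by positivity) _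
  have hD9 : D ^ (9:ℕ) = (N + N) ^ (4:ℕ) := rpow49_pow9 (by positivity)
  have hNle : N ≤ 21023/100000 := by
    apply le_of_pow_le_pow_left₀ (n := 4) (by norm_num) (by norm_num)
    rw [hN4]; norm_num
  have hDge : (679:ℝ)/1000 ≤ D := by
    apply le_of_pow_le_pow_left₀ (n := 9) (by norm_num) hDnn
    rw [hD9]
    have : (N + N) ^ (4:ℕ) = 16 * N ^ (4:ℕ) := by ring
    rw [this, hN4]; norm_num
  have hDpos : (0:ℝ) < D := lt_of_lt_of_le (by norm_num) hDge
  rw [div_le_iff₀ hDpos]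
  calc N ≤ 21023/100000 := hNle
    _ ≤ 31/100 * (679/1000) := by norm_num
    _ ≤ 31/100 * D := by nlinarith

lemma cptWeight_nine_tenths_ge : 87/100 ≤ cptWeight (9/10) := by
  unfold cptWeight
  have h : (1 - (9:ℝ)/10) = 1/10 := by norm_num
  rw [h]
  set A := ((9:ℝ)/10) ^ ((9:ℝ)/4) with hA
  set B := ((1:ℝ)/10) ^ ((9:ℝ)/4) with hB
  have hAnn : 0 ≤ A := Real.rpow_nonneg (by norm_num) _
  have hBnn : 0 ≤ B := Real.rpow_nonneg (by norm_num) _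
  have hA4 : A ^ (4:ℕ) = (9/10:ℝ) ^ (9:ℕ) := rpow94_pow4 (by norm_num)
  have hB4 : B ^ (4:ℕ) = (1/10:ℝ) ^ (9:ℕ) := rpow94_pow4 (by norm_num)
  set D := (A + B) ^ ((4:ℝ)/9) with hD
  have hDnn : 0 ≤ D := Real.rpow_nonneg (by positivity) _
  have hD9 : D ^ (9:ℕ) = (A + B) ^ (4:ℕ) := rpow49_pow9 (by positivity)
  have hAge : (7889:ℝ)/10000 ≤ A := by
    apply le_of_pow_le_pow_left₀ (n := 4) (by norm_num) hAnn
    rw [hA4]; norm_num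
  have hAle : A ≤ 78895/100000 := by
    apply le_of_pow_le_pow_left₀ (n := 4) (by norm_num) (by norm_num)
    rw [hA4]; norm_num
  have hBle : B ≤ 5624/1000000 := by
    apply le_of_pow_le_pow_left₀ (n := 4) (by norm_num) (by norm_num)
    rw [hB4]; norm_num
  have hDle : D ≤ 9029/10000 := by
    apply le_of_pow_le_pow_left₀ (n := 9) (by norm_num) (by norm_num)
    rw [hD9]
    calc (A + B) ^ (4:ℕ) ≤ (78895/100000 + 5624/1000000 : ℝ) ^ (4:ℕ) := by
          apply pow_le_pow_left₀ (by positivity) (by linarith)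
      _ ≤ ((9029:ℝ)/10000) ^ (9:ℕ) := by norm_num
  have hDpos : (0:ℝ) < D := by
    apply Real.rpow_pos_of_pos
    have : (0:ℝ) < A := Real.rpow_pos_of_pos (by norm_num) _
    linarith
  rw [le_div_iff₀ hDpos]
  calc (87:ℝ)/100 * D ≤ 87/100 * (9029/10000) := by nlinarith
    _ ≤ 7889/10000 := by norm_num
    _ ≤ A := hAge

/-- The CPT-function is not convex on the probability simplex
`Δ = {(p₁,p₂) : p₁ ≥ 0, p₂ ≥ 0, p₁ + p₂ ≤ 1}`. -/
theorem cpt_not_convex :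
    ¬ ConvexOn ℝ {p : ℝ × ℝ | 0 ≤ p.1 ∧ 0 ≤ p.2 ∧ p.1 + p.2 ≤ 1} cptEx := by
  rintro ⟨-, h⟩
  have hx : ((0:ℝ), (1/2:ℝ)) ∈ {p : ℝ × ℝ | 0 ≤ p.1 ∧ 0 ≤ p.2 ∧ p.1 + p.2 ≤ 1} := by
    constructor <;> norm_num
  have hy : ((0:ℝ), (1:ℝ)) ∈ {p : ℝ × ℝ | 0 ≤ p.1 ∧ 0 ≤ p.2 ∧ p.1 + p.2 ≤ 1} := by
    constructor <;> norm_num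
  have := h hx hy (by norm_num : (0:ℝ) ≤ 1/5) (by norm_num : (0:ℝ) ≤ 4/5) (by norm_num)
  have hcomb : (1/5:ℝ) • ((0:ℝ), (1/2:ℝ)) + (4/5:ℝ) • ((0:ℝ), (1:ℝ)) = ((0:ℝ), (9/10:ℝ)) := by
    simp [Prod.smul_mk, Prod.ext_iff]
    norm_num
  rw [hcomb] at this
  have e1 : cptEx ((0:ℝ), (9/10:ℝ)) = cptWeight (9/10) := by
    simp [cptEx, cptWeight_zero]
  have e2 : cptEx ((0:ℝ), (1/2:ℝ)) = cptWeight (1/2) := by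
    simp [cptEx, cptWeight_zero]
  have e3 : cptEx ((0:ℝ), (1:ℝ)) = cptWeight 1 := by
    simp [cptEx, cptWeight_zero]
  rw [e1, e2, e3, cptWeight_one] at this
  simp only [smul_eq_mul] at this
  have h1 := cptWeight_half_le
  have h2 := cptWeight_nine_tenths_ge
  linarith
end
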